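/- arXiv:1608.06492 — 4 statements merged into one kernel-verified Lean document; each statement's English description precedes it below -/
import Mathlib

section
/- Let V be a finite nonempty type with n = |V|, let V_I ⊆ V and S ⊆ V_I. Let μ be a probability mass function on functions ρ : V → V → Bool (a random 'infects-within-τ' relation), and let w be drawn uniformly from V, independently of ρ. Define the symmetric difference D(ρ) = |{u ∈ V_I : ∀ s ∈ S, ¬ ρ s u}| + |{v ∉ V_I : ∃ s ∈ S, ρ s v}|, and the truncated reverse reachable (RR) set of source w under ρ as R(ρ,w) = {x ∈ V_I : ρ x w}. Let X(ρ,w) = 1 if either (w ∈ V_I and S ∩ R(ρ,w) = ∅) or (w ∉ V_I and S ∩ R(ρ,w) ≠ ∅), and X(ρ,w) = 0 otherwise. Then E[X] = E[D]/n, where E[X] is taken over the product of μ with the uniform distribution on V, and E[D] over μ. -/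
/-!
Since `S ⊆ V_I`, the RR set `R(ρ, w)` meets `S` exactly when some `s ∈ S` infects `w`. Hence, for a
fixed realization `ρ`, summing `X(ρ, w)` over all `n` sources `w` counts each node of `V_I` missed
by the cascade and each node outside `V_I` reached by it once, i.e. `∑_w X(ρ, w) = D(ρ)`; averaging
over `ρ` gives the claim.
-/

open Finset

theorem Finset.inter_filter_eq_empty_iff_of_subset {α : Type*} [DecidableEq α] {S T : Finset α}
    (hST : S ⊆ T) (p : α → Prop) [DecidablePred p] :
    S ∩ T.filter p = ∅ ↔ ∀ s ∈ S, ¬ p s := by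
  rw [inter_filter, inter_eq_left.mpr hST, filter_eq_empty_iff]

theorem Finset.sum_boole_mem_and_or_notMem_and_not {α R : Type*} [Fintype α] [DecidableEq α]
    [AddCommMonoidWithOne R] (T : Finset α) (p : α → Prop) [DecidablePred p] :
    ∑ w, (if (w ∈ T ∧ p w) ∨ (w ∉ T ∧ ¬ p w) then (1 : R) else 0)
      = #(T.filter p) + #(Tᶜ.filter (¬ p ·)) := by
  rw [← sum_add_sum_compl T, ← sum_boole, ← sum_boole]
  congr 1
  · exact sum_congr rfl fun w hw => by simp [hw]
  · exact sum_congr rfl fun w hw => by simp [mem_compl.mp hw]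

theorem sum_rrSet_indicator_eq_symmDiff_card {V : Type*} [Fintype V] [DecidableEq V]
    {V_I S : Finset V} (hS : S ⊆ V_I) (ρ : V → V → Bool) :
    ∑ w : V, (if (w ∈ V_I ∧ S ∩ V_I.filter (fun x => ρ x w) = ∅)
        ∨ (w ∉ V_I ∧ S ∩ V_I.filter (fun x => ρ x w) ≠ ∅) then (1 : ℝ) else 0)
      = ((V_I.filter (fun u => ∀ s ∈ S, ¬ ρ s u)).card : ℝ)
        + ((V_Iᶜ.filter (fun v => ∃ s ∈ S, ρ s v)).card : ℝ) := by
  simp only [Ne, inter_filter_eq_empty_iff_of_subset hS]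
  rw [sum_boole_mem_and_or_notMem_and_not]
  simp only [not_forall, not_not, exists_prop]

theorem rr_set_expectation_general
    {V : Type*} [Fintype V] [DecidableEq V]
    (V_I S : Finset V) (hS : S ⊆ V_I) (μ : PMF (V → V → Bool)) :
    (∑ ρ : V → V → Bool, ∑ w : V,
      (μ ρ).toReal * (1 / (Fintype.card V : ℝ)) *
        (if (w ∈ V_I ∧ S ∩ V_I.filter (fun x => ρ x w) = ∅)
            ∨ (w ∉ V_I ∧ S ∩ V_I.filter (fun x => ρ x w) ≠ ∅) then (1 : ℝ) else 0))
    = (∑ ρ : V → V → Bool, (μ ρ).toReal *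
        (((V_I.filter (fun u => ∀ s ∈ S, ¬ ρ s u)).card : ℝ)
          + ((V_Iᶜ.filter (fun v => ∃ s ∈ S, ρ s v)).card : ℝ)))
      / (Fintype.card V : ℝ) := by
  rw [sum_div]
  refine sum_congr rfl fun ρ _ => ?_
  rw [← mul_sum, sum_rrSet_indicator_eq_symmDiff_card hS]
  ring

/-- With `ρ` a random "infects-within-τ" relation distributed by a PMF `μ`
and `w` uniform on `V` (independent of `ρ`), the expectation of the indicator `X` that
the truncated RR set with source `w` is a blue set missed by `S` or a red set hit by `S`
equals `E[D]/n`, where `D` is the symmetric difference of the cascade from `S` with `V_I`. -/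
theorem rr_set_expectation
    {V : Type*} [Fintype V] [Nonempty V] [DecidableEq V]
    (V_I S : Finset V) (hS : S ⊆ V_I) (μ : PMF (V → V → Bool)) :
    (∑ ρ : V → V → Bool, ∑ w : V,
      (μ ρ).toReal * (1 / (Fintype.card V : ℝ)) *
        (if (w ∈ V_I ∧ S ∩ V_I.filter (fun x => ρ x w) = ∅)
            ∨ (w ∉ V_I ∧ S ∩ V_I.filter (fun x => ρ x w) ≠ ∅) then (1 : ℝ) else 0))
    = (∑ ρ : V → V → Bool, (μ ρ).toReal *
        (((V_I.filter (fun u => ∀ s ∈ S, ¬ ρ s u)).card : ℝ)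
          + ((V_Iᶜ.filter (fun v => ∃ s ∈ S, ρ s v)).card : ℝ)))
      / (Fintype.card V : ℝ) :=
  rr_set_expectation_general V_I S hS μ
end

section
/- (Estimation accuracy with Λ-scaled sample size; i.i.d. form of Lemma 3.) Let X_1, X_2, … be i.i.d. random variables taking values in [0,1] with mean μ > 0, let c = 2(e−2), let δ ∈ (0,1), k ∈ ℕ, ε ∈ (0,1), and let ν > 0 satisfy ε·√(ν·μ) ≤ μ. Set Λ = (1+ε)·2c·( ln(2/δ) + k·ln 2 + 1 ) / ε². Then for every natural number T with T ≥ Λ/ν, Pr[ | (1/T) Σ_{i=1}^T X_i − μ | ≥ ε·√(ν·μ) ] ≤ δ / (2^k + 1). -/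
/-! For `Y ∈ [0, 1]` with mean `m` and `|t| ≤ 1`, the series bound
`exp u ≤ 1 + u + (e - 2) u²` on `[-1, 1]` together with `Y² ≤ Y` gives
`E exp (t Y) ≤ exp ((t + (e - 2) t²) m)`. Multiplying over `T` independent summands and applying
the exponential Markov inequality at `±t` with the optimal `t = s / (2 (e - 2) m)` yields
`P(|S / T - m| ≥ s) ≤ 2 exp (-T s² / (4 (e - 2) m))` whenever `s ≤ m`. For `s = ε √(ν m)` the
exponent is `T ν ε² / (4 (e - 2)) ≥ (1 + ε) (ln (2 / δ) + k ln 2 + 1)`, and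
`2 exp (-(ln (2 / δ) + k ln 2 + 1)) = δ / (2 ^ k e) ≤ δ / (2 ^ k + 1)`. -/

open MeasureTheory ProbabilityTheory Real

lemma Real.exp_le_one_add_add_mul_sq_of_abs_le_one {u : ℝ} (hu : |u| ≤ 1) :
    exp u ≤ 1 + u + (exp 1 - 2) * u ^ 2 := by
  have tail (x : ℝ) : HasSum (fun n ↦ x ^ (n + 2) / (n + 2).factorial) (exp x - 1 - x) := by
    have h := (hasSum_nat_add_iff' 2).mpr (exp_eq_exp_ℝ ▸ NormedSpace.expSeries_div_hasSum_exp x)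
    simpa [Finset.sum_range_succ, sub_sub] using h
  -- termwise `u ^ (n + 2) ≤ u ^ 2 = u ^ 2 * 1 ^ (n + 2)`, and the tail at `1` is `e - 2`
  have hle := hasSum_le (fun n ↦ ?_) (tail u) ((tail 1).mul_left (u ^ 2))
  · linarith
  have hun : u ^ n ≤ 1 := (le_abs_self _).trans (abs_pow u n ▸ pow_le_one₀ (abs_nonneg u) hu)
  rw [one_pow, mul_div_assoc', mul_one, pow_add, mul_comm]
  gcongr
  exact mul_le_of_le_one_right (sq_nonneg u) hun

namespace ProbabilityTheory

variable {Ω ι : Type*} [MeasurableSpace Ω] {μ : Measure Ω}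

lemma mgf_le_exp_of_mem_Icc [IsProbabilityMeasure μ] {Y : Ω → ℝ} (hY : AEMeasurable Y μ)
    (hrange : ∀ᵐ ω ∂μ, Y ω ∈ Set.Icc (0 : ℝ) 1) {t : ℝ} (ht : |t| ≤ 1) :
    mgf Y μ t ≤ exp ((t + (exp 1 - 2) * t ^ 2) * μ[Y]) := by
  set a := t + (exp 1 - 2) * t ^ 2
  have hYint : Integrable Y μ := Integrable.of_mem_Icc 0 1 hY hrange
  have hc : 0 ≤ exp 1 - 2 := by linarith [exp_one_gt_d9]
  calc mgf Y μ t ≤ ∫ ω, 1 + a * Y ω ∂μ := by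
        refine integral_mono_ae (integrable_exp_mul_of_mem_Icc hY hrange)
          ((integrable_const 1).add (hYint.const_mul a)) ?_
        filter_upwards [hrange] with ω ⟨hY0, hY1⟩
        have htY : |t * Y ω| ≤ 1 := by
          rw [abs_mul, abs_of_nonneg hY0]; exact mul_le_one₀ ht hY0 hY1
        have hsq : (t * Y ω) ^ 2 ≤ t ^ 2 * Y ω := by
          rw [mul_pow]
          exact mul_le_mul_of_nonneg_left (pow_le_of_le_one hY0 hY1 two_ne_zero) (sq_nonneg t)
        have := exp_le_one_add_add_mul_sq_of_abs_le_one htY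
        nlinarith [mul_le_mul_of_nonneg_left hsq hc]
    _ = 1 + a * μ[Y] := by
        rw [integral_add (integrable_const _) (hYint.const_mul a), integral_const,
          integral_const_mul]
        simp
    _ ≤ exp (a * μ[Y]) := by linarith [add_one_le_exp (a * μ[Y])]

lemma iIndepFun.mgf_sum_le_of_mem_Icc [IsProbabilityMeasure μ] {X : ι → Ω → ℝ}
    (hindep : iIndepFun X μ) (hmeas : ∀ i, Measurable (X i))
    (hrange : ∀ i, ∀ᵐ ω ∂μ, X i ω ∈ Set.Icc (0 : ℝ) 1) {m : ℝ} (hmean : ∀ i, μ[X i] = m) (s : Finset ι) {t : ℝ} (ht : |t| ≤ 1) :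
    mgf (∑ i ∈ s, X i) μ t ≤ exp (s.card * ((t + (exp 1 - 2) * t ^ 2) * m)) := by
  rw [hindep.mgf_sum hmeas, exp_nat_mul, ← Finset.prod_const]
  refine Finset.prod_le_prod (fun i _ ↦ mgf_nonneg) fun i _ ↦ ?_
  exact hmean i ▸ mgf_le_exp_of_mem_Icc (hmeas i).aemeasurable (hrange i) ht

lemma measureReal_abs_sub_ge_le_two_mul_exp [IsFiniteMeasure μ] {S : Ω → ℝ} {a b x : ℝ}
    (hint : ∀ t, |t| ≤ 1 → Integrable (fun ω ↦ exp (t * S ω)) μ)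
    (hmgf : ∀ t, |t| ≤ 1 → mgf S μ t ≤ exp (a * t + b * t ^ 2))
    (hb : 0 < b) (hx : 0 ≤ x) (hxb : x ≤ 2 * b) :
    μ.real {ω | x ≤ |S ω - a|} ≤ 2 * exp (-(x ^ 2 / (4 * b))) := by
  -- `l = x / (2 b)` minimises the exponent `-l x + b l²`
  set l := x / (2 * b)
  have hl0 : 0 ≤ l := by positivity
  have hl1 : |l| ≤ 1 := by rw [abs_of_nonneg hl0, div_le_one (by positivity)]; exact hxb
  have hexp : -(x ^ 2 / (4 * b)) = -l * x + b * l ^ 2 := by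
    simp only [l]; field_simp; ring
  have upper : μ.real {ω | a + x ≤ S ω} ≤ exp (-(x ^ 2 / (4 * b))) := by
    calc μ.real {ω | a + x ≤ S ω} ≤ exp (-l * (a + x)) * mgf S μ l :=
          measure_ge_le_exp_mul_mgf _ hl0 (hint l hl1)
      _ ≤ exp (-l * (a + x)) * exp (a * l + b * l ^ 2) := by gcongr; exact hmgf l hl1
      _ = exp (-(x ^ 2 / (4 * b))) := by rw [← exp_add, hexp]; ring_nf
  have lower : μ.real {ω | S ω ≤ a - x} ≤ exp (-(x ^ 2 / (4 * b))) := by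
    have hl1' : |-l| ≤ 1 := by rwa [abs_neg]
    calc μ.real {ω | S ω ≤ a - x} ≤ exp (- -l * (a - x)) * mgf S μ (-l) :=
          measure_le_le_exp_mul_mgf _ (neg_nonpos.2 hl0) (hint (-l) hl1')
      _ ≤ exp (- -l * (a - x)) * exp (a * -l + b * (-l) ^ 2) := by gcongr; exact hmgf (-l) hl1'
      _ = exp (-(x ^ 2 / (4 * b))) := by rw [← exp_add, hexp]; ring_nf
  have hsub : {ω | x ≤ |S ω - a|} ⊆ {ω | a + x ≤ S ω} ∪ {ω | S ω ≤ a - x} := by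
    intro ω hω
    rcases le_abs'.1 (show x ≤ |S ω - a| from hω) with h | h
    · exact Or.inr (show S ω ≤ a - x by linarith)
    · exact Or.inl (show a + x ≤ S ω by linarith)
  calc μ.real {ω | x ≤ |S ω - a|} ≤ μ.real {ω | a + x ≤ S ω} + μ.real {ω | S ω ≤ a - x} :=
        (measureReal_mono hsub).trans (measureReal_union_le _ _)
    _ ≤ 2 * exp (-(x ^ 2 / (4 * b))) := by linarith

lemma iIndepFun.measureReal_abs_sum_div_card_sub_ge_le [IsProbabilityMeasure μ] {X : ι → Ω → ℝ}
    (hindep : iIndepFun X μ) (hmeas : ∀ i, Measurable (X i))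
    (hrange : ∀ i, ∀ᵐ ω ∂μ, X i ω ∈ Set.Icc (0 : ℝ) 1) {m : ℝ} (hm : 0 < m)
    (hmean : ∀ i, μ[X i] = m) (I : Finset ι) {x : ℝ} (hx : 0 ≤ x) (hxm : x ≤ m) :
    μ.real {ω | x ≤ |(∑ i ∈ I, X i ω) / I.card - m|}
      ≤ 2 * exp (-(I.card * x ^ 2 / (4 * (exp 1 - 2) * m))) := by
  rcases I.eq_empty_or_nonempty with rfl | hI
  · exact measureReal_le_one.trans (by simp)
  have hn : 0 < (I.card : ℝ) := by exact_mod_cast hI.card_pos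
  have hc : 1 / 2 < exp 1 - 2 := by linarith [exp_one_gt_d9]
  have hset : {ω | x ≤ |(∑ i ∈ I, X i ω) / I.card - m|}
      = {ω | I.card * x ≤ |(∑ i ∈ I, X i) ω - I.card * m|} := by
    ext ω
    have hmul : (∑ i ∈ I, X i) ω - I.card * m = I.card * ((∑ i ∈ I, X i ω) / I.card - m) := by
      rw [Finset.sum_apply]; field_simp
    show x ≤ |_| ↔ (I.card : ℝ) * x ≤ |_|
    rw [hmul, abs_mul, abs_of_pos hn, mul_le_mul_iff_of_pos_left hn]
  have hxb : I.card * x ≤ 2 * ((exp 1 - 2) * I.card * m) := by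
    have := mul_le_mul_of_nonneg_left (hxm.trans (by nlinarith : m ≤ 2 * (exp 1 - 2) * m)) hn.le
    linarith
  rw [hset]
  refine (measureReal_abs_sub_ge_le_two_mul_exp
    (fun t _ ↦ hindep.integrable_exp_mul_sum hmeas fun i _ ↦
      integrable_exp_mul_of_mem_Icc (hmeas i).aemeasurable (hrange i))
    (fun t ht ↦ (hindep.mgf_sum_le_of_mem_Icc hmeas hrange hmean I ht).trans_eq
      (by congr 1; ring))
    (by positivity) (by positivity) hxb).trans_eq ?_
  congr 3
  field_simp

end ProbabilityTheory

lemma le_mul_mul_sq_div_of_div_le {Λ ν ε c L T : ℝ} (hν : 0 < ν) (hε : 0 < ε) (hc : 0 < c)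
    (hL : 0 ≤ L) (hΛ : Λ = (1 + ε) * c * L / ε ^ 2) (hT : Λ / ν ≤ T) :
    L ≤ T * ν * ε ^ 2 / c := by
  have hΛε : Λ * ε ^ 2 = (1 + ε) * c * L := by rw [hΛ]; field_simp
  have hTν : Λ * ε ^ 2 ≤ T * ν * ε ^ 2 := by gcongr; exact (div_le_iff₀ hν).1 hT
  rw [le_div_iff₀ hc]
  nlinarith [mul_nonneg hε.le (mul_nonneg hc.le hL)]

lemma two_mul_exp_neg_log_add_le {δ : ℝ} (hδ : 0 < δ) (k : ℕ) :
    2 * exp (-(log (2 / δ) + k * log 2 + 1)) ≤ δ / (2 ^ k + 1) := by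
  have hexp : 2 * exp (-(log (2 / δ) + k * log 2 + 1)) = δ / (2 ^ k * exp 1) := by
    rw [neg_add, neg_add, exp_add, exp_add, exp_neg, exp_neg, exp_neg, exp_log (by positivity),
      exp_nat_mul, exp_log two_pos]
    field_simp
  rw [hexp]
  gcongr
  have h1 : (1 : ℝ) ≤ 2 ^ k := one_le_pow₀ one_le_two
  nlinarith [exp_one_gt_d9]

theorem lambda_sample_accuracy_general
    {Ω : Type*} [MeasurableSpace Ω] (μ : Measure Ω) [IsProbabilityMeasure μ]
    (X : ℕ → Ω → ℝ) (m : ℝ)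
    (hmeas : ∀ i, Measurable (X i))
    (hindep : iIndepFun X μ)
    (hrange : ∀ i, ∀ᵐ ω ∂μ, X i ω ∈ Set.Icc (0 : ℝ) 1)
    (hmean : ∀ i, ∫ ω, X i ω ∂μ = m) (hm : 0 < m)
    (δ : ℝ) (hδ : δ ∈ Set.Ioo (0 : ℝ) 1) (k : ℕ)
    (ε : ℝ) (hε : ε ∈ Set.Ioo (0 : ℝ) 1)
    (ν : ℝ) (hν : 0 < ν) (hνm : ε * Real.sqrt (ν * m) ≤ m)
    (Λ : ℝ)
    (hΛ : Λ = (1 + ε) * (2 * (2 * (Real.exp 1 - 2)))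
            * (Real.log (2 / δ) + k * Real.log 2 + 1) / ε ^ 2)
    (T : ℕ) (hT : Λ / ν ≤ (T : ℝ)) :
    (μ {ω | ε * Real.sqrt (ν * m)
              ≤ |(∑ i ∈ Finset.range T, X i ω) / T - m|}).toReal
      ≤ δ / (2 ^ k + 1) := by
  obtain ⟨hδ0, hδ1⟩ := hδ
  obtain ⟨hε0, -⟩ := hε
  have hs2 : (ε * √(ν * m)) ^ 2 = ε ^ 2 * (ν * m) := by
    rw [mul_pow, sq_sqrt (mul_pos hν hm).le]
  have hL : 0 ≤ log (2 / δ) + k * log 2 + 1 := by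
    have : 0 < log (2 / δ) := log_pos (by rw [lt_div_iff₀ hδ0]; linarith)
    positivity
  have hc : 0 < 2 * (2 * (exp 1 - 2)) := by linarith [exp_one_gt_d9]
  calc μ.real {ω | ε * √(ν * m) ≤ |(∑ i ∈ Finset.range T, X i ω) / T - m|}
      ≤ 2 * exp (-(T * (ε * √(ν * m)) ^ 2 / (4 * (exp 1 - 2) * m))) := by
        simpa using hindep.measureReal_abs_sum_div_card_sub_ge_le hmeas hrange hm hmean
          (Finset.range T) (by positivity) hνm
    _ = 2 * exp (-(T * ν * ε ^ 2 / (2 * (2 * (exp 1 - 2))))) := by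
        rw [hs2]; field_simp; ring_nf
    _ ≤ 2 * exp (-(log (2 / δ) + k * log 2 + 1)) := by
        gcongr; exact le_mul_mul_sq_div_of_div_le hν hε0 hc hL hΛ hT
    _ ≤ δ / (2 ^ k + 1) := two_mul_exp_neg_log_add_le hδ0 k

/-- Estimation accuracy with `Λ`-scaled sample size (i.i.d. form of Lemma 3):
with `Λ = (1+ε)·2c·(ln(2/δ) + k ln 2 + 1)/ε²` and `T ≥ Λ/ν`, the sample mean of `T`
i.i.d. `[0,1]`-valued variables with mean `m > 0` deviates from `m` by at least
`ε·√(ν·m)` with probability at most `δ/(2^k + 1)`. -/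
theorem lambda_sample_accuracy
    {Ω : Type*} [MeasurableSpace Ω] (μ : Measure Ω) [IsProbabilityMeasure μ]
    (X : ℕ → Ω → ℝ) (m : ℝ)
    (hmeas : ∀ i, Measurable (X i))
    (hindep : iIndepFun X μ)
    (hid : ∀ i j, IdentDistrib (X i) (X j) μ μ)
    (hrange : ∀ i, ∀ᵐ ω ∂μ, X i ω ∈ Set.Icc (0 : ℝ) 1)
    (hmean : ∀ i, ∫ ω, X i ω ∂μ = m) (hm : 0 < m)
    (δ : ℝ) (hδ : δ ∈ Set.Ioo (0 : ℝ) 1) (k : ℕ)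
    (ε : ℝ) (hε : ε ∈ Set.Ioo (0 : ℝ) 1)
    (ν : ℝ) (hν : 0 < ν) (hνm : ε * Real.sqrt (ν * m) ≤ m)
    (Λ : ℝ)
    (hΛ : Λ = (1 + ε) * (2 * (2 * (Real.exp 1 - 2)))
            * (Real.log (2 / δ) + k * Real.log 2 + 1) / ε ^ 2)
    (T : ℕ) (hT : Λ / ν ≤ (T : ℝ)) :
    (μ {ω | ε * Real.sqrt (ν * m)
              ≤ |(∑ i ∈ Finset.range T, X i ω) / T - m|}).toReal
      ≤ δ / (2 ^ k + 1) :=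
  lambda_sample_accuracy_general μ X m hmeas hindep hrange hmean hm δ hδ k ε hε ν hν hνm Λ hΛ T hT
end

section
/- (Quadratic inequality core of Theorem 3.) Let Δ ≥ 1 and 0 < ε ≤ 1/(1+Δ) be real numbers, and let A > 0 and B ≥ 0 be real numbers. If (1−ε)·B ≤ Δ·( A + ε·√(A·B) ), then B ≤ (2Δ/(1−ε)²)·A. -/
/-!
Multiplying the hypothesis by `c = 1 - ε` and bounding the cross term `c·Δε·√A·√B` by AM-GM
gives `c²B ≤ (2cΔ + Δ²ε²)A`; the constraint on `ε` makes `εΔ ≤ 1`, so the coefficient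
`2cΔ + Δ²ε² = 2Δ - Δε(2 - Δε)` is at most `2Δ`.
-/

theorem sq_mul_le_of_mul_le_add_mul_sqrt {c p q A B : ℝ} (hc : 0 ≤ c) (hA : 0 ≤ A) (hB : 0 ≤ B)
    (h : c * B ≤ p * A + q * √(A * B)) : c ^ 2 * B ≤ (2 * c * p + q ^ 2) * A := by
  have hAM : (c * √B) * (q * √A) ≤ ((c * √B) ^ 2 + (q * √A) ^ 2) / 2 := by
    linarith [two_mul_le_add_sq (c * √B) (q * √A)]
  have hsq : (c * √B) ^ 2 + (q * √A) ^ 2 = c ^ 2 * B + q ^ 2 * A := by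
    rw [mul_pow, mul_pow, Real.sq_sqrt hA, Real.sq_sqrt hB]
  have : c ^ 2 * B ≤ c * p * A + (c ^ 2 * B + q ^ 2 * A) / 2 :=
    calc c ^ 2 * B = c * (c * B) := by ring
      _ ≤ c * (p * A + q * √(A * B)) := mul_le_mul_of_nonneg_left h hc
      _ = c * p * A + (c * √B) * (q * √A) := by rw [Real.sqrt_mul hA]; ring
      _ ≤ c * p * A + (c ^ 2 * B + q ^ 2 * A) / 2 := by rw [← hsq]; linarith
  linarith

/-- Quadratic inequality core of Theorem 3: if `Δ ≥ 1`,
`0 < ε ≤ 1/(1+Δ)`, `A > 0`, `B ≥ 0` and `(1-ε)·B ≤ Δ·(A + ε·√(A·B))`,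
then `B ≤ (2Δ/(1-ε)²)·A`. -/
theorem quadratic_inequality_core
    (Δ ε A B : ℝ) (hΔ : 1 ≤ Δ) (hε0 : 0 < ε) (hε : ε ≤ 1 / (1 + Δ))
    (hA : 0 < A) (hB : 0 ≤ B)
    (h : (1 - ε) * B ≤ Δ * (A + ε * Real.sqrt (A * B))) :
    B ≤ (2 * Δ / (1 - ε) ^ 2) * A := by
  have hεΔ : ε * (1 + Δ) ≤ 1 := (le_div_iff₀ (by linarith)).mp hε
  have hc : 0 < 1 - ε := by nlinarith
  have hsq : (1 - ε) ^ 2 * B ≤ (2 * (1 - ε) * Δ + (Δ * ε) ^ 2) * A :=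
    sq_mul_le_of_mul_le_add_mul_sqrt hc.le hA.le hB (by linarith)
  have hcoef : 2 * (1 - ε) * Δ + (Δ * ε) ^ 2 ≤ 2 * Δ := by
    nlinarith [mul_pos hε0 (by linarith : (0 : ℝ) < Δ)]
  rw [div_mul_eq_mul_div, le_div_iff₀ (by positivity)]
  linarith [mul_le_mul_of_nonneg_right hcoef hA.le]
end

section
/- (Deterministic chain establishing the 2Δ/(1−ε)² approximation factor of Theorem 3.) Let Δ ≥ 1 and 0 < ε ≤ 1/(1+Δ) be real numbers, let OPT > 0 and E ≥ 0 be real numbers, and let D̂ and D* be real numbers such that: (i) (1−ε)·E ≤ D̂ (the estimator does not underestimate E[D(Ŝ)] by more than a (1−ε)-factor), (ii) D* ≤ OPT + ε·√(OPT·E) (the estimator does not overestimate the optimum by more than the additive error), and (iii) D̂ ≤ Δ·D* (the Δ-approximation guarantee of the submodular-cost covering algorithm on the sampled instance). Then E ≤ (2Δ/(1−ε)²)·OPT. -/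
/-!
Chaining the three estimates gives `(1 - ε) E ≤ Δ (OPT + ε √(OPT E))`. Bounding the geometric
mean by the arithmetic mean makes this linear in `E`; the condition `ε (1 + Δ) ≤ 1` lets the
left side absorb the resulting `Δ ε E / 2`, leaving `(1 - ε) E ≤ (2 + ε) Δ OPT`, and
`(2 + ε)(1 - ε) ≤ 2` finishes.
-/

lemma Real.sqrt_mul_le_half_add {x y : ℝ} (h : 0 ≤ x + y) : √(x * y) ≤ (x + y) / 2 :=
  Real.sqrt_le_iff.mpr ⟨by linarith, by nlinarith [sq_nonneg (x - y)]⟩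

lemma mul_le_one_sub_of_le_one_div_one_add {ε Δ : ℝ} (hΔ : 0 < 1 + Δ) (hε : ε ≤ 1 / (1 + Δ)) :
    ε * Δ ≤ 1 - ε := by
  have : ε * (1 + Δ) ≤ 1 := (le_div_iff₀ hΔ).mp hε
  linarith

lemma one_sub_mul_le_of_le_mul_add_mul_sqrt {Δ ε OPT E : ℝ} (hΔ : 0 ≤ Δ) (hε : 0 ≤ ε)
    (hεΔ : ε * Δ ≤ 1 - ε) (hOPT : 0 ≤ OPT) (hE : 0 ≤ E)
    (h : (1 - ε) * E ≤ Δ * (OPT + ε * √(OPT * E))) :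
    (1 - ε) * E ≤ (2 + ε) * Δ * OPT := by
  have am_gm : Δ * ε * √(OPT * E) ≤ Δ * ε * ((OPT + E) / 2) :=
    mul_le_mul_of_nonneg_left (Real.sqrt_mul_le_half_add (by linarith)) (by positivity)
  have absorb : ε * Δ * E ≤ (1 - ε) * E := mul_le_mul_of_nonneg_right hεΔ hE
  linarith

/-- Deterministic chain establishing the `2Δ/(1-ε)²` approximation
factor of Theorem 3. -/
theorem approximation_factor_chain
    (Δ ε OPT E D_hat D_star : ℝ)
    (hΔ : 1 ≤ Δ) (hε0 : 0 < ε) (hε : ε ≤ 1 / (1 + Δ))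
    (hOPT : 0 < OPT) (hE : 0 ≤ E)
    (h1 : (1 - ε) * E ≤ D_hat)
    (h2 : D_star ≤ OPT + ε * Real.sqrt (OPT * E))
    (h3 : D_hat ≤ Δ * D_star) :
    E ≤ (2 * Δ / (1 - ε) ^ 2) * OPT := by
  have hεΔ := mul_le_one_sub_of_le_one_div_one_add (by linarith) hε
  have hε1 : 0 < 1 - ε := by linarith [mul_le_mul_of_nonneg_left hΔ hε0.le]
  have chain : (1 - ε) * E ≤ Δ * (OPT + ε * √(OPT * E)) :=
    h1.trans (h3.trans (mul_le_mul_of_nonneg_left h2 (by linarith)))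
  have linear := one_sub_mul_le_of_le_mul_add_mul_sqrt (by linarith) hε0.le hεΔ hOPT.le hE chain
  rw [div_mul_eq_mul_div, le_div_iff₀ (by positivity)]
  calc E * (1 - ε) ^ 2 = (1 - ε) * ((1 - ε) * E) := by ring
    _ ≤ (1 - ε) * ((2 + ε) * Δ * OPT) := mul_le_mul_of_nonneg_left linear hε1.le
    _ = 2 * Δ * OPT - (ε + ε ^ 2) * (Δ * OPT) := by ring
    _ ≤ 2 * Δ * OPT := sub_le_self _ (by positivity)
end
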